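/- Let f : ℝ^d → ℝ be the quadratic function f(x) = xᵀHx for a symmetric matrix H. Let P ∈ ℝ^{d×q} satisfy PᵀP = I_q, let z ∼ N(0, I_q), and define g_ε = ((f(x + εPz) − f(x − εPz))/(2ε)) Pz. Then, writing u = Pᵀ∇f(x), the mean of g_ε is PPᵀ∇f(x), and the variance satisfies Var(g_ε) := E‖g_ε − E g_ε‖² = (q+1)‖u‖². In particular the variance grows linearly in the perturbation dimension q. -/

import Mathlib

open MeasureTheory ProbabilityTheory Matrix
open scoped InnerProductSpace ENNReal NNReal Real

/-- The standard Gaussian measure `N(0, I_n)` on `ℝ^n` (with the Euclidean norm). -/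
noncomputable def stdGaussian (n : ℕ) : Measure (EuclideanSpace ℝ (Fin n)) :=
  (Measure.pi fun _ : Fin n => gaussianReal 0 1).map
    (MeasurableEquiv.toLp 2 (Fin n → ℝ))

section aux

lemma integrable_pow_exp (n : ℕ) :
    Integrable (fun x : ℝ => x ^ n * Real.exp (-x ^ 2 / 2)) := by
  have h := integrable_rpow_mul_exp_neg_mul_sq (b := 2⁻¹) (by norm_num)
    (s := (n : ℝ)) (by exact_mod_cast neg_one_lt_zero.trans_le n.cast_nonneg)
  have : ∀ x : ℝ, -(2⁻¹ : ℝ) * x ^ 2 = -x ^ 2 / 2 := fun x => by ring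
  simp_rw [Real.rpow_natCast, this] at h
  exact h

lemma J0 : ∫ x : ℝ, Real.exp (-x ^ 2 / 2) = Real.sqrt (2 * π) := by
  have h := integral_gaussian 2⁻¹
  have : ∀ x : ℝ, -(2⁻¹ : ℝ) * x ^ 2 = -x ^ 2 / 2 := fun x => by ring
  simp_rw [this] at h
  rw [h]
  rw [show π / 2⁻¹ = 2 * π by ring]

lemma J1 : ∫ x : ℝ, x * Real.exp (-x ^ 2 / 2) = 0 := by
  have hderiv : ∀ x : ℝ, HasDerivAt (fun y : ℝ => -Real.exp (-y ^ 2 / 2))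
      (x * Real.exp (-x ^ 2 / 2)) x := by
    intro x
    have h1 : HasDerivAt (fun y : ℝ => -y ^ 2 / 2) (-x) x := by
      have := ((hasDerivAt_pow 2 x).neg).div_const 2
      simpa using this.congr_deriv (by push_cast; ring)
    have := (h1.exp).neg
    refine this.congr_deriv ?_
    ring
  have hf' : Integrable (fun x : ℝ => x * Real.exp (-x ^ 2 / 2)) := by
    simpa using integrable_pow_exp 1
  have hf0 : Integrable (fun x : ℝ => Real.exp (-x ^ 2 / 2)) := by
    simpa using integrable_pow_exp 0
  have hf : Integrable (fun x : ℝ => -Real.exp (-x ^ 2 / 2)) := hf0.neg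
  exact integral_eq_zero_of_hasDerivAt_of_integrable hderiv hf' hf

lemma Jrec (k : ℕ) : ∫ x : ℝ, x ^ (k + 2) * Real.exp (-x ^ 2 / 2)
    = (k + 1 : ℝ) * ∫ x : ℝ, x ^ k * Real.exp (-x ^ 2 / 2) := by
  have hderiv : ∀ x : ℝ, HasDerivAt (fun y : ℝ => y ^ (k + 1) * Real.exp (-y ^ 2 / 2))
      ((k + 1 : ℝ) * (x ^ k * Real.exp (-x ^ 2 / 2)) - x ^ (k + 2) * Real.exp (-x ^ 2 / 2)) x := by
    intro x
    have h1 : HasDerivAt (fun y : ℝ => -y ^ 2 / 2) (-x) x := by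
      have := ((hasDerivAt_pow 2 x).neg).div_const 2
      simpa using this.congr_deriv (by push_cast; ring)
    have := (hasDerivAt_pow (k + 1) x).mul h1.exp
    refine this.congr_deriv ?_
    push_cast
    ring
  have hint : Integrable (fun x : ℝ =>
      (k + 1 : ℝ) * (x ^ k * Real.exp (-x ^ 2 / 2)) - x ^ (k + 2) * Real.exp (-x ^ 2 / 2)) :=
    ((integrable_pow_exp k).const_mul _).sub (integrable_pow_exp (k + 2))
  have h0 := integral_eq_zero_of_hasDerivAt_of_integrable hderiv hint (integrable_pow_exp (k + 1))
  rw [integral_sub ((integrable_pow_exp k).const_mul _) (integrable_pow_exp (k + 2)),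
    integral_const_mul, sub_eq_zero] at h0
  exact h0.symm



lemma gaussian_transfer (g : ℝ → ℝ) :
    ∫ x, g x ∂(gaussianReal 0 1) = ∫ x, gaussianPDFReal 0 1 x * g x := by
  rw [gaussianReal_of_var_ne_zero _ one_ne_zero]
  have h := integral_withDensity_eq_integral_smul
    (μ := volume) (f := fun x => (gaussianPDFReal 0 1 x).toNNReal)
    ((measurable_gaussianPDFReal 0 1).real_toNNReal) g
  rw [show (volume.withDensity (gaussianPDF 0 1))
      = volume.withDensity (fun x => ((gaussianPDFReal 0 1 x).toNNReal : ℝ≥0∞)) from rfl, h]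
  congr 1
  ext x
  rw [NNReal.smul_def, smul_eq_mul, Real.coe_toNNReal _ (gaussianPDFReal_nonneg 0 1 x)]

lemma gaussian_integrable_transfer {g : ℝ → ℝ}
    (h : Integrable (fun x => gaussianPDFReal 0 1 x * g x)) :
    Integrable g (gaussianReal 0 1) := by
  rw [gaussianReal_of_var_ne_zero _ one_ne_zero]
  rw [show (volume.withDensity (gaussianPDF 0 1))
      = volume.withDensity (fun x => ((gaussianPDFReal 0 1 x).toNNReal : ℝ≥0∞)) from rfl]
  rw [integrable_withDensity_iff_integrable_smul ((measurable_gaussianPDFReal 0 1).real_toNNReal)]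
  convert h using 2 with x
  · rfl
  rw [NNReal.smul_def, smul_eq_mul, Real.coe_toNNReal _ (gaussianPDFReal_nonneg 0 1 x)]

lemma pdf_eq (x : ℝ) :
    gaussianPDFReal 0 1 x = (Real.sqrt (2 * π))⁻¹ * Real.exp (-x ^ 2 / 2) := by
  simp [gaussianPDFReal]

section moments
noncomputable def Mo (n : ℕ) : ℝ := ∫ x, x ^ n ∂(gaussianReal 0 1)



lemma sqrt_two_pi_pos : 0 < Real.sqrt (2 * π) :=
  Real.sqrt_pos.2 (by positivity)

lemma Mo_eq (n : ℕ) :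
    Mo n = (Real.sqrt (2 * π))⁻¹ * ∫ x : ℝ, x ^ n * Real.exp (-x ^ 2 / 2) := by
  rw [Mo, gaussian_transfer]
  simp_rw [pdf_eq, mul_assoc, mul_comm (Real.exp _), integral_const_mul]

lemma integrable_pow_gaussian (n : ℕ) :
    Integrable (fun x : ℝ => x ^ n) (gaussianReal 0 1) := by
  apply gaussian_integrable_transfer
  have := (integrable_pow_exp n).const_mul (Real.sqrt (2 * π))⁻¹
  convert this using 2 with x
  rw [pdf_eq]
  ring

lemma Mo0 : Mo 0 = 1 := by
  rw [Mo_eq]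
  simp only [pow_zero, one_mul, J0]
  exact inv_mul_cancel₀ sqrt_two_pi_pos.ne'

lemma Mo1 : Mo 1 = 0 := by
  rw [Mo_eq]; simp_rw [pow_one, J1, mul_zero]

lemma Mo2 : Mo 2 = 1 := by
  have h := Jrec 0
  rw [Mo_eq, h]
  simp only [pow_zero, one_mul, Nat.cast_zero, zero_add, J0]
  exact inv_mul_cancel₀ sqrt_two_pi_pos.ne'

lemma Mo3 : Mo 3 = 0 := by
  have h := Jrec 1
  rw [Mo_eq, h]
  simp_rw [pow_one, J1, mul_zero]

lemma Mo4 : Mo 4 = 3 := by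
  have h2 := Jrec 2
  have h0 := Jrec 0
  rw [Mo_eq, h2, h0]
  simp only [pow_zero, one_mul, Nat.cast_zero, zero_add, Nat.cast_ofNat, J0]
  field_simp
  norm_num
end moments

variable {q : ℕ}

lemma integrable_monomial (m : Fin q → ℕ) :
    Integrable (fun z : Fin q → ℝ => ∏ l, z l ^ m l)
      (Measure.pi fun _ : Fin q => gaussianReal 0 1) := by
  letI : MeasureSpace ℝ := ⟨gaussianReal 0 1⟩
  haveI : SigmaFinite (volume : Measure ℝ) :=
    (inferInstance : SigmaFinite (gaussianReal 0 1))
  exact Integrable.fintype_prod (f := fun l (x : ℝ) => x ^ m l)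
    (fun i => integrable_pow_gaussian (m i))

lemma integral_monomial (m : Fin q → ℕ) :
    ∫ z : Fin q → ℝ, ∏ l, z l ^ m l ∂(Measure.pi fun _ : Fin q => gaussianReal 0 1)
      = ∏ l, Mo (m l) := by
  letI : MeasureSpace ℝ := ⟨gaussianReal 0 1⟩
  haveI : SigmaFinite (volume : Measure ℝ) :=
    (inferInstance : SigmaFinite (gaussianReal 0 1))
  exact MeasureTheory.integral_fintype_prod_eq_prod (fun l (x : ℝ) => x ^ m l)

lemma stdGaussian_integrable_monomial (m : Fin q → ℕ) :
    Integrable (fun z : EuclideanSpace ℝ (Fin q) => ∏ l, z l ^ m l) (stdGaussian q) := by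
  rw [_root_.stdGaussian, MeasureTheory.integrable_map_equiv]
  exact integrable_monomial m

lemma stdGaussian_integral_monomial (m : Fin q → ℕ) :
    ∫ z : EuclideanSpace ℝ (Fin q), ∏ l, z l ^ m l ∂(stdGaussian q) = ∏ l, Mo (m l) := by
  rw [_root_.stdGaussian, MeasureTheory.integral_map_equiv]
  exact integral_monomial m

instance : IsProbabilityMeasure (stdGaussian q) :=
  MeasureTheory.Measure.isProbabilityMeasure_map
    (Measurable.aemeasurable (MeasurableEquiv.measurable _))

/-- multiplicity function for the pair monomial -/
def mp (i j : Fin q) : Fin q → ℕ := fun l => (if l = i then 1 else 0) + (if l = j then 1 else 0)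
/-- multiplicity function for the quartic monomial -/
def mq (i j k : Fin q) : Fin q → ℕ :=
  fun l => (if l = i then 1 else 0) + (if l = j then 1 else 0) + (if l = k then 2 else 0)

lemma prod_pow_single (z : Fin q → ℝ) (i : Fin q) (n : ℕ) :
    ∏ l, z l ^ (if l = i then n else 0) = z i ^ n := by
  have h : ∀ l : Fin q, z l ^ (if l = i then n else 0) = if l = i then z l ^ n else 1 :=
    fun l => by split <;> simp
  simp only [h, Finset.prod_ite_eq', Finset.mem_univ, if_true]

lemma mp_prod (i j : Fin q) (z : Fin q → ℝ) :
    ∏ l, z l ^ mp i j l = z i * z j := by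
  simp only [mp, pow_add, Finset.prod_mul_distrib, prod_pow_single, pow_one]

lemma mq_prod (i j k : Fin q) (z : Fin q → ℝ) :
    ∏ l, z l ^ mq i j k l = z i * z j * z k ^ 2 := by
  simp only [mq, pow_add, Finset.prod_mul_distrib, prod_pow_single, pow_one]

lemma stdG_integrable_pair (i j : Fin q) :
    Integrable (fun z : EuclideanSpace ℝ (Fin q) => z i * z j) (stdGaussian q) := by
  have := stdGaussian_integrable_monomial (mp i j)
  simpa only [mp_prod] using this

lemma stdG_integrable_quad (i j k : Fin q) :
    Integrable (fun z : EuclideanSpace ℝ (Fin q) => z i * z j * z k ^ 2) (stdGaussian q) := by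
  have := stdGaussian_integrable_monomial (mq i j k)
  simpa only [mq_prod] using this

lemma stdG_integral_pair (i j : Fin q) :
    ∫ z : EuclideanSpace ℝ (Fin q), z i * z j ∂(stdGaussian q)
      = if i = j then 1 else 0 := by
  have h := stdGaussian_integral_monomial (mp i j)
  simp_rw [mp_prod] at h
  rw [h]
  by_cases hij : i = j
  · subst hij
    have h1 : ∀ l : Fin q, Mo (mp i i l) = 1 := by
      intro l
      by_cases hl : l = i <;> simp [mp, hl, Mo0, Mo2]
    simp [h1]
  · rw [if_neg hij]
    apply Finset.prod_eq_zero (Finset.mem_univ i)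
    simp [mp, hij, Mo1]

lemma stdG_integral_quad (i j k : Fin q) :
    ∫ z : EuclideanSpace ℝ (Fin q), z i * z j * z k ^ 2 ∂(stdGaussian q)
      = if i = j then (if i = k then 3 else 1) else 0 := by
  have h := stdGaussian_integral_monomial (mq i j k)
  simp_rw [mq_prod] at h
  rw [h]
  by_cases hij : i = j
  · subst hij
    rw [if_pos rfl]
    by_cases hik : i = k
    · subst hik
      rw [if_pos rfl]
      have h1 : ∀ l : Fin q, Mo (mq i i i l) = if l = i then 3 else 1 := by
        intro l
        by_cases hl : l = i <;> simp [mq, hl, Mo0, Mo4]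
      simp only [h1, Finset.prod_ite_eq', Finset.mem_univ, if_true]
    · rw [if_neg hik]
      have h1 : ∀ l : Fin q, Mo (mq i i k l) = 1 := by
        intro l
        rcases eq_or_ne l i with hl | hl
        · subst hl
          simp [mq, hik, Mo2]
        · rcases eq_or_ne l k with hk | hk
          · subst hk
            simp [mq, hl, Mo2]
          · simp [mq, hl, hk, Mo0]
      simp [h1]
  · rw [if_neg hij]
    apply Finset.prod_eq_zero (Finset.mem_univ i)
    rcases eq_or_ne i k with hik | hik
    · subst hik
      simp [mq, hij, Mo3]
    · simp [mq, hij, hik, Mo1]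

variable {d q : ℕ}

lemma toEuclideanLin_adjoint (P : Matrix (Fin d) (Fin q) ℝ)
    (z : EuclideanSpace ℝ (Fin q)) (w : EuclideanSpace ℝ (Fin d)) :
    ⟪Matrix.toEuclideanLin P z, w⟫_ℝ = ⟪z, Matrix.toEuclideanLin Pᵀ w⟫_ℝ := by
  have h : Pᵀ = Pᴴ := by
    ext i j
    simp [Matrix.conjTranspose_apply]
  rw [h, Matrix.toEuclideanLin_conjTranspose_eq_adjoint, LinearMap.adjoint_inner_right]

lemma sym_fact {H : Matrix (Fin d) (Fin d) ℝ} (hH : H.IsSymm)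
    (v w : EuclideanSpace ℝ (Fin d)) :
    ⟪Matrix.toEuclideanLin H v, w⟫_ℝ = ⟪v, Matrix.toEuclideanLin H w⟫_ℝ := by
  nth_rewrite 2 [← hH]
  exact toEuclideanLin_adjoint H v w

lemma PtP_id {P : Matrix (Fin d) (Fin q) ℝ} (hP : Pᵀ * P = 1)
    (z : EuclideanSpace ℝ (Fin q)) :
    Matrix.toEuclideanLin Pᵀ (Matrix.toEuclideanLin P z) = z := by
  have : (Matrix.toEuclideanLin Pᵀ).comp (Matrix.toEuclideanLin P)
      = Matrix.toEuclideanLin (Pᵀ * P) := by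
    simp only [Matrix.toEuclideanLin_eq_toLin]
    rw [Matrix.toLin_mul _ (PiLp.basisFun 2 ℝ (Fin d))]
  have h2 := congrArg (fun L => L z) this
  simp only [LinearMap.comp_apply] at h2
  rw [h2, hP]
  rw [Matrix.toEuclideanLin_eq_toLin, Matrix.toLin_one]
  rfl

lemma gradient_quadratic {H : Matrix (Fin d) (Fin d) ℝ} (hH : H.IsSymm)
    {f : EuclideanSpace ℝ (Fin d) → ℝ}
    (hf : ∀ y, f y = ⟪y, Matrix.toEuclideanLin H y⟫_ℝ) (x : EuclideanSpace ℝ (Fin d)) :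
    gradient f x = (2:ℝ) • Matrix.toEuclideanLin H x := by
  set A := Matrix.toEuclideanLin H with hA
  have hgrad : HasGradientAt f ((2:ℝ) • A x) x := by
    rw [hasGradientAt_iff_hasFDerivAt]
    have hA' : HasFDerivAt (fun y : EuclideanSpace ℝ (Fin d) => A y)
        (LinearMap.toContinuousLinearMap A) x :=
      (LinearMap.toContinuousLinearMap A).hasFDerivAt
    have h := (hasFDerivAt_id x).inner ℝ hA'
    have hfe : f = fun y => ⟪y, A y⟫_ℝ := funext hf
    rw [hfe]
    convert h using 1
    · rfl
    · rfl
    apply ContinuousLinearMap.ext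
    intro w
    simp only [InnerProductSpace.toDual_apply_apply, ContinuousLinearMap.comp_apply,
      ContinuousLinearMap.prod_apply, ContinuousLinearMap.id_apply, fderivInnerCLM_apply,
      LinearMap.coe_toContinuousLinearMap', id_eq]
    have h2 : ⟪w, A x⟫_ℝ = ⟪x, A w⟫_ℝ := by
      rw [real_inner_comm]
      exact sym_fact hH x w
    rw [two_smul, inner_add_left, h2, sym_fact hH]
  exact hgrad.gradient


lemma normsq (w : EuclideanSpace ℝ (Fin q)) : ‖w‖ ^ 2 = ∑ k, w k ^ 2 := by
  rw [EuclideanSpace.norm_eq, Real.sq_sqrt (by positivity)]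
  simp [sq_abs]

end aux


/-- for a quadratic `f(x) = xᵀHx` with `H` symmetric, `P ∈ ℝ^{d×q}` with
`PᵀP = I`, `z ∼ N(0, I_q)`, and `g_ε = ((f(x+εPz) − f(x−εPz))/(2ε)) Pz`, writing
`u = Pᵀ∇f(x)`: the mean of `g_ε` is `PPᵀ∇f(x)`, and
`Var(g_ε) = E‖g_ε − E g_ε‖² = (q+1)‖u‖²`, which grows linearly in `q`. -/
theorem mean_and_variance_quadratic (d q : ℕ)
    (H : Matrix (Fin d) (Fin d) ℝ) (hH : H.IsSymm)
    (f : EuclideanSpace ℝ (Fin d) → ℝ)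
    (hf : ∀ y, f y = ⟪y, Matrix.toEuclideanLin H y⟫_ℝ)
    (P : Matrix (Fin d) (Fin q) ℝ) (hP : Pᵀ * P = 1)
    (x : EuclideanSpace ℝ (Fin d)) (ε : ℝ) (hε : 0 < ε) :
    (∫ z, ((f (x + ε • Matrix.toEuclideanLin P z) - f (x - ε • Matrix.toEuclideanLin P z))
            / (2 * ε)) • Matrix.toEuclideanLin P z ∂(stdGaussian q)
        = Matrix.toEuclideanLin P (Matrix.toEuclideanLin Pᵀ (gradient f x)))
    ∧ ∫ z, ‖(((f (x + ε • Matrix.toEuclideanLin P z) - f (x - ε • Matrix.toEuclideanLin P z))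
              / (2 * ε)) • Matrix.toEuclideanLin P z)
            - ∫ z', ((f (x + ε • Matrix.toEuclideanLin P z') - f (x - ε • Matrix.toEuclideanLin P z'))
              / (2 * ε)) • Matrix.toEuclideanLin P z' ∂(stdGaussian q)‖ ^ 2 ∂(stdGaussian q)
        = ((q : ℝ) + 1) * ‖Matrix.toEuclideanLin Pᵀ (gradient f x)‖ ^ 2 := by
  set A := Matrix.toEuclideanLin H with hA
  set Pl := Matrix.toEuclideanLin P with hPl
  set Pt := Matrix.toEuclideanLin Pᵀ with hPt
  set u : EuclideanSpace ℝ (Fin q) := Pt (gradient f x) with hu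
  set B := EuclideanSpace.basisFun (Fin q) ℝ with hB
  have hadj : ∀ (z : EuclideanSpace ℝ (Fin q)) (w : EuclideanSpace ℝ (Fin d)),
      ⟪Pl z, w⟫_ℝ = ⟪z, Pt w⟫_ℝ := toEuclideanLin_adjoint P
  have hsymA : ∀ v w : EuclideanSpace ℝ (Fin d), ⟪A v, w⟫_ℝ = ⟪v, A w⟫_ℝ := sym_fact hH
  have hPtPl : ∀ z : EuclideanSpace ℝ (Fin q), Pt (Pl z) = z := PtP_id hP
  -- pointwise identity for the finite-difference quotient
  have hcz : ∀ z : EuclideanSpace ℝ (Fin q),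
      (f (x + ε • Pl z) - f (x - ε • Pl z)) / (2 * ε) = ⟪u, z⟫_ℝ := by
    intro z
    have h1 : ⟪x, A (Pl z)⟫_ℝ = ⟪Pl z, A x⟫_ℝ := by
      rw [← hsymA, real_inner_comm]
    have hexp : f (x + ε • Pl z) - f (x - ε • Pl z) = 4 * ε * ⟪Pl z, A x⟫_ℝ := by
      rw [hf, hf]
      simp only [map_add, map_sub, _root_.map_smul, inner_add_left, inner_add_right,
        inner_sub_left, inner_sub_right, real_inner_smul_left, real_inner_smul_right]
      rw [h1]
      ring
    have hugrad : u = Pt ((2:ℝ) • A x) := by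
      rw [hu, gradient_quadratic hH hf x]
    have hiu : ⟪u, z⟫_ℝ = 2 * ⟪Pl z, A x⟫_ℝ := by
      rw [hugrad, real_inner_comm, ← hadj, real_inner_smul_right]
    rw [hexp, hiu]
    field_simp
    ring
  simp only [hcz]
  -- inner product expansion
  have hinner : ∀ (v z : EuclideanSpace ℝ (Fin q)), ⟪v, z⟫_ℝ = ∑ i, v i * z i := by
    intro v z
    simp [PiLp.inner_apply, RCLike.inner_apply, mul_comm]
  -- the mean
  have hmean : ∫ z, ⟪u, z⟫_ℝ • Pl z ∂(stdGaussian q) = Pl u := by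
    have hz_expand : ∀ z : EuclideanSpace ℝ (Fin q),
        ⟪u, z⟫_ℝ • Pl z = ∑ j, (∑ i, u i * (z i * z j)) • Pl (B j) := by
      intro z
      have hzs : Pl z = ∑ j, z j • Pl (B j) := by
        conv_lhs => rw [← B.sum_repr z]
        rw [map_sum]
        simp_rw [_root_.map_smul]
        simp [hB, EuclideanSpace.basisFun_repr]
      rw [hzs, Finset.smul_sum]
      refine Finset.sum_congr rfl fun j _ => ?_
      rw [smul_smul]
      congr 1
      rw [hinner, Finset.sum_mul]
      exact Finset.sum_congr rfl fun i _ => by ring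
    simp only [hz_expand]
    rw [integral_finset_sum _ (fun j _ =>
      (integrable_finset_sum _ (fun i _ => (stdG_integrable_pair i j).const_mul _)).smul_const _)]
    have hval : ∀ j : Fin q, (∫ z, (∑ i, u i * (z i * z j)) ∂(stdGaussian q)) = u j := by
      intro j
      rw [integral_finset_sum _ (fun i _ => (stdG_integrable_pair i j).const_mul _)]
      simp_rw [integral_const_mul, stdG_integral_pair]
      simp
    simp_rw [integral_smul_const, hval]
    calc ∑ j, u j • Pl (B j) = Pl (∑ j, u j • B j) := by
          rw [map_sum]; simp_rw [_root_.map_smul]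
      _ = Pl u := by
          congr 1
          have := B.sum_repr u
          simp only [hB, EuclideanSpace.basisFun_repr] at this
          exact this
  refine ⟨hmean, ?_⟩
  rw [hmean]
  -- isometry
  have hnorm : ∀ w : EuclideanSpace ℝ (Fin q), ‖Pl w‖ = ‖w‖ := by
    intro w
    rw [norm_eq_sqrt_real_inner (Pl w), norm_eq_sqrt_real_inner w, hadj, hPtPl]
  -- pointwise second moment identity
  have hpt : ∀ z : EuclideanSpace ℝ (Fin q),
      ‖⟪u, z⟫_ℝ • Pl z - Pl u‖ ^ 2
        = (∑ k, ∑ i, ∑ j, (u i * u j) * (z i * z j * z k ^ 2))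
          - 2 * (∑ k, ∑ i, (u k * u i) * (z i * z k)) + ∑ k, u k ^ 2 := by
    intro z
    rw [← _root_.map_smul, ← map_sub, hnorm, normsq]
    have hc : ∀ k : Fin q, ((⟪u, z⟫_ℝ • z - u) k) = (∑ i, u i * z i) * z k - u k := by
      intro k
      simp [hinner]
    simp_rw [hc]
    have e1 : ∀ k : Fin q, ((∑ i, u i * z i) * z k - u k) ^ 2
        = (∑ i, ∑ j, (u i * u j) * (z i * z j * z k ^ 2))
          - 2 * (∑ i, (u k * u i) * (z i * z k)) + u k ^ 2 := by
      intro k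
      have a1 : (∑ i, ∑ j, (u i * u j) * (z i * z j * z k ^ 2))
          = ((∑ i, u i * z i) * (∑ i, u i * z i)) * z k ^ 2 := by
        rw [Finset.sum_mul_sum, Finset.sum_mul]
        refine Finset.sum_congr rfl fun i _ => ?_
        rw [Finset.sum_mul]
        exact Finset.sum_congr rfl fun j _ => by ring
      have a2 : (∑ i, (u k * u i) * (z i * z k)) = u k * ((∑ i, u i * z i) * z k) := by
        rw [Finset.sum_mul, Finset.mul_sum]
        exact Finset.sum_congr rfl fun i _ => by ring
      rw [a1, a2]
      ring
    simp_rw [e1]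
    rw [Finset.sum_add_distrib, Finset.sum_sub_distrib, ← Finset.mul_sum]
  simp only [hpt]
  -- integrability of the pieces
  have hint1 : Integrable
      (fun z : EuclideanSpace ℝ (Fin q) =>
        ∑ k, ∑ i, ∑ j, (u i * u j) * (z i * z j * z k ^ 2)) (stdGaussian q) :=
    integrable_finset_sum _ (fun k _ => integrable_finset_sum _ (fun i _ =>
      integrable_finset_sum _ (fun j _ => (stdG_integrable_quad i j k).const_mul _)))
  have hint2 : Integrable
      (fun z : EuclideanSpace ℝ (Fin q) =>
        2 * (∑ k, ∑ i, (u k * u i) * (z i * z k))) (stdGaussian q) :=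
    (integrable_finset_sum _ (fun k _ => integrable_finset_sum _ (fun i _ =>
      (stdG_integrable_pair i k).const_mul _))).const_mul 2
  have hint12 : Integrable
      (fun z : EuclideanSpace ℝ (Fin q) =>
        (∑ k, ∑ i, ∑ j, (u i * u j) * (z i * z j * z k ^ 2))
          - 2 * (∑ k, ∑ i, (u k * u i) * (z i * z k))) (stdGaussian q) := hint1.sub hint2
  rw [integral_add hint12 (integrable_const _), integral_sub hint1 hint2, integral_const]
  have A1 : ∫ z, (∑ k, ∑ i, ∑ j, (u i * u j) * ((z : EuclideanSpace ℝ (Fin q)) i * z j * z k ^ 2)) ∂(stdGaussian q)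
      = ∑ k, ∑ i, ∑ j, (u i * u j) * (if i = j then (if i = k then (3:ℝ) else 1) else 0) := by
    rw [integral_finset_sum _ (fun k _ => integrable_finset_sum _ (fun i _ =>
      integrable_finset_sum _ (fun j _ => (stdG_integrable_quad i j k).const_mul _)))]
    refine Finset.sum_congr rfl fun k _ => ?_
    rw [integral_finset_sum _ (fun i _ =>
      integrable_finset_sum _ (fun j _ => (stdG_integrable_quad i j k).const_mul _))]
    refine Finset.sum_congr rfl fun i _ => ?_
    rw [integral_finset_sum _ (fun j _ => (stdG_integrable_quad i j k).const_mul _)]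
    refine Finset.sum_congr rfl fun j _ => ?_
    rw [integral_const_mul, stdG_integral_quad]
  have A2 : ∫ z, (2 * ∑ k, ∑ i, (u k * u i) * ((z : EuclideanSpace ℝ (Fin q)) i * z k)) ∂(stdGaussian q)
      = 2 * ∑ k, (u k * u k) := by
    rw [integral_const_mul]
    congr 1
    rw [integral_finset_sum _ (fun k _ => integrable_finset_sum _ (fun i _ =>
      (stdG_integrable_pair i k).const_mul _))]
    refine Finset.sum_congr rfl fun k _ => ?_
    rw [integral_finset_sum _ (fun i _ => (stdG_integrable_pair i k).const_mul _)]
    simp_rw [integral_const_mul, stdG_integral_pair]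
    simp
  rw [A1, A2]
  -- evaluate the triple sum
  have S1 : (∑ k, ∑ i, ∑ j, (u i * u j) * (if i = j then (if i = k then (3:ℝ) else 1) else 0))
      = ((q : ℝ) + 2) * ∑ i, u i ^ 2 := by
    have hj : ∀ (k i : Fin q), (∑ j, (u i * u j) * (if i = j then (if i = k then (3:ℝ) else 1) else 0))
        = (u i * u i) * (if i = k then (3:ℝ) else 1) := by
      intro k i
      rw [Finset.sum_eq_single i]
      · simp
      · intro b _ hb
        rw [if_neg (fun h => hb h.symm), mul_zero]
      · intro h
        exact absurd (Finset.mem_univ i) h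
    simp_rw [hj]
    rw [Finset.sum_comm]
    have hk : ∀ i : Fin q, (∑ k, (u i * u i) * (if i = k then (3:ℝ) else 1))
        = ((q : ℝ) + 2) * u i ^ 2 := by
      intro i
      rw [← Finset.mul_sum]
      have : ∀ k : Fin q, (if i = k then (3:ℝ) else 1) = (if i = k then (2:ℝ) else 0) + 1 := by
        intro k; split <;> norm_num
      simp_rw [this]
      rw [Finset.sum_add_distrib, Finset.sum_ite_eq, Finset.sum_const]
      simp [Finset.card_univ]
      ring
    simp_rw [hk]
    rw [← Finset.mul_sum]
  rw [S1]
  have hnu : ‖u‖ ^ 2 = ∑ i, u i ^ 2 := normsq u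
  rw [hnu]
  have : (∑ k, u k * u k) = ∑ k, u k ^ 2 := Finset.sum_congr rfl fun k _ => by ring
  rw [this]
  simp only [measure_univ, probReal_univ, ENNReal.toReal_one, smul_eq_mul, one_mul]
  ring
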